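/- (a) For an object V of C, v ∈ V and φ ∈ V^du define g_{φv}: U(g) → F by g_{φv}(x) := φ(x_V v). Then F[U(g)] := {g_{φv} : φ ∈ V^du, v ∈ V, V an object of C} is a subalgebra of the convolution algebra U(g)* containing the counit ε, and it is invariant under the action of U(g)^op ⊗ U(g) on U(g)* given by (π(a⊗b)h)(x) := h(axb). (b) If the pair C, C^du is good for integrating g, then the map Ψ: F[M] → F[U(g)] defined by Ψ(f)(x) := evaluation at 1 ∈ M of the function m ↦ f computed via the U(g)-action (explicitly, Ψ(f_{φv}) = g_{φv} for all φ ∈ V^du, v ∈ V, V an object of C) is a well-defined isomorphism of algebras which is equivariant for the U(g)^op ⊗ U(g)-actions, where U(g) ⊆ U(Lie(M)) acts on F[M] by π(x⊗y)f_{φv} = f_{(x_V)^du φ, y_V v}. -/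

import Mathlib

open TensorProduct

attribute [local instance 100] LieRing.ofAssociativeRing

universe u v w

/-- The data of a (full sub)category `C` of `g`-modules together with a category of duals:
an index type `ι`, for each index a `g`-module `V i`, and a chosen point-separating
subspace `du i` of the full linear dual of `V i`. -/
structure TannakaSetting (F : Type u) [Field F] (g : Type v) [LieRing g] [LieAlgebra F g] where
  ι : Type w
  V : ι → Type w
  [iAdd : ∀ i, AddCommGroup (V i)]
  [iMod : ∀ i, Module F (V i)]
  ρ : ∀ i, g →ₗ⁅F⁆ Module.End F (V i)
  du : ∀ i, Submodule F (Module.Dual F (V i))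

attribute [instance] TannakaSetting.iAdd TannakaSetting.iMod

namespace TannakaSetting

variable {F : Type u} [Field F] {g : Type v} [LieRing g] [LieAlgebra F g]
variable (D : TannakaSetting F g)

/-- `g`-equivariant linear maps between objects of the category. -/
def IsHom {i j : D.ι} (f : D.V i →ₗ[F] D.V j) : Prop :=
  ∀ x : g, f ∘ₗ (D.ρ i x : Module.End F (D.V i)) = (D.ρ j x : Module.End F (D.V j)) ∘ₗ f

/-- An endomorphism of `V i` lies in `End_{V^du}(V)`, i.e. its transpose preserves
the chosen dual subspace. -/
def PreservesDu (i : D.ι) (f : Module.End F (D.V i)) : Prop :=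
  ∀ φ ∈ D.du i, f.dualMap φ ∈ D.du i

/-- The action of `x ∈ g` on a tensor product of two objects. -/
noncomputable def tensorρ (i j : D.ι) (x : g) : Module.End F (D.V i ⊗[F] D.V j) :=
  TensorProduct.map (D.ρ i x) LinearMap.id + TensorProduct.map LinearMap.id (D.ρ j x)

/-- `e` realizes `V k` as a tensor product of the `g`-modules `V i` and `V j`. -/
def IsTensorProd (i j k : D.ι) (e : D.V k ≃ₗ[F] (D.V i ⊗[F] D.V j)) : Prop :=
  ∀ x : g, e.toLinearMap ∘ₗ (D.ρ k x : Module.End F (D.V k)) = D.tensorρ i j x ∘ₗ e.toLinearMap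

/-- `e` realizes `V k` as a direct sum of the `g`-modules `V i` and `V j`. -/
def IsSumProd (i j k : D.ι) (e : D.V k ≃ₗ[F] (D.V i × D.V j)) : Prop :=
  ∀ x : g, e.toLinearMap ∘ₗ (D.ρ k x : Module.End F (D.V k)) =
    ((D.ρ i x : Module.End F (D.V i)).prodMap (D.ρ j x : Module.End F (D.V j))) ∘ₗ e.toLinearMap

/-- `V i` is a one-dimensional trivial `g`-module. -/
def IsTrivOneDim (i : D.ι) : Prop :=
  Module.finrank F (D.V i) = 1 ∧ ∀ x : g, (D.ρ i x : Module.End F (D.V i)) = 0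

/-- The functional `φ ⊗ ψ` on a tensor product. -/
noncomputable def tensorDual {i j : D.ι} (φ : Module.Dual F (D.V i))
    (ψ : Module.Dual F (D.V j)) : Module.Dual F (D.V i ⊗[F] D.V j) :=
  TensorProduct.dualDistrib F (D.V i) (D.V j) (φ ⊗ₜ[F] ψ)

/-- The axioms on the pair of categories `C`, `C^du`:
`C` is closed under isomorphism, (binary) direct sums, tensor products, submodules,
contains a one-dimensional trivial module, `g` acts faithfully, and the duals separate points,
are stable under the transposed `g`-action and under transposes of morphisms, and are compatible
with direct sums and tensor products. -/
structure IsGoodSetting : Prop where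
  separating : ∀ (i : D.ι) (v : D.V i), v ≠ 0 → ∃ φ ∈ D.du i, φ v ≠ 0
  du_g : ∀ (i : D.ι) (x : g), D.PreservesDu i (D.ρ i x)
  du_hom : ∀ (i j : D.ι) (f : D.V i →ₗ[F] D.V j), D.IsHom f →
    ∀ ψ ∈ D.du j, f.dualMap ψ ∈ D.du i
  faithful : ∀ x : g, (∀ i, (D.ρ i x : Module.End F (D.V i)) = 0) → x = 0
  exists_triv : ∃ i, D.IsTrivOneDim i
  exists_sum : ∀ i j : D.ι, ∃ (k : D.ι) (e : D.V k ≃ₗ[F] (D.V i × D.V j)), D.IsSumProd i j k e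
  exists_tensor : ∀ i j : D.ι,
    ∃ (k : D.ι) (e : D.V k ≃ₗ[F] (D.V i ⊗[F] D.V j)), D.IsTensorProd i j k e
  du_tensor : ∀ (i j k : D.ι) (e : D.V k ≃ₗ[F] (D.V i ⊗[F] D.V j)), D.IsTensorProd i j k e →
    ∀ φ ∈ D.du i, ∀ ψ ∈ D.du j, e.toLinearMap.dualMap (D.tensorDual φ ψ) ∈ D.du k
  du_sum : ∀ (i j k : D.ι) (e : D.V k ≃ₗ[F] (D.V i × D.V j)), D.IsSumProd i j k e →
    ∀ ξ : Module.Dual F (D.V k), ξ ∈ D.du k ↔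
      ∃ φ ∈ D.du i, ∃ ψ ∈ D.du j,
        ξ = e.toLinearMap.dualMap
          ((LinearMap.fst F (D.V i) (D.V j)).dualMap φ +
            (LinearMap.snd F (D.V i) (D.V j)).dualMap ψ)
  submod_closed : ∀ (i : D.ι) (U : Submodule F (D.V i)), (∀ x : g, ∀ u ∈ U, D.ρ i x u ∈ U) →
    ∃ (k : D.ι) (e : D.V k ≃ₗ[F] ↥U), ∀ (x : g) (v : D.V k),
      (↑(e ((D.ρ k x) v)) : D.V i) = D.ρ i x ↑(e v)
  isoClosed : ∀ (W : Type w) [AddCommGroup W] [Module F W] (ρW : g →ₗ⁅F⁆ Module.End F W)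
    (i : D.ι) (e : D.V i ≃ₗ[F] W), (∀ (x : g) (v : D.V i), e (D.ρ i x v) = ρW x (e v)) →
    ∃ (k : D.ι) (e' : D.V k ≃ₗ[F] W), ∀ (x : g) (v : D.V k), e' (D.ρ k x v) = ρW x (e' v)

/-- The algebra `Nat` of natural transformations: families of endomorphisms
`m i ∈ End_{V^du}(V i)` commuting with all `g`-equivariant maps between objects. -/
def NatAlg : Set (∀ i, Module.End F (D.V i)) :=
  { m | (∀ i, D.PreservesDu i (m i)) ∧
        ∀ (i j : D.ι) (f : D.V i →ₗ[F] D.V j), D.IsHom f → f ∘ₗ m i = m j ∘ₗ f }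

/-- The Tannaka monoid `M`: natural transformations compatible with tensor products and
acting as the identity on trivial one-dimensional modules. -/
def M : Set (∀ i, Module.End F (D.V i)) :=
  { m | m ∈ D.NatAlg ∧
        (∀ (i j k : D.ι) (e : D.V k ≃ₗ[F] (D.V i ⊗[F] D.V j)), D.IsTensorProd i j k e →
          e.toLinearMap ∘ₗ m k = TensorProduct.map (m i) (m j) ∘ₗ e.toLinearMap) ∧
        (∀ i, D.IsTrivOneDim i → m i = 1) }

/-- The matrix coefficient `f_{φ v}` as a function on the Tannaka monoid `M`. -/
def matCoef (i : D.ι) (φ : Module.Dual F (D.V i)) (v : D.V i) : ↥D.M → F :=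
  fun m => φ (m.1 i v)

/-- The coordinate ring `F[M]` of matrix coefficients (a set of functions on `M`). -/
def coordRing : Set (↥D.M → F) :=
  { f | ∃ (i : D.ι) (φ : Module.Dual F (D.V i)) (v : D.V i), φ ∈ D.du i ∧ f = D.matCoef i φ v }

/-- The Lie algebra `Lie(M)` of the Tannaka monoid. -/
def LieM : Set (∀ i, Module.End F (D.V i)) :=
  { x | x ∈ D.NatAlg ∧
        (∀ (i j k : D.ι) (e : D.V k ≃ₗ[F] (D.V i ⊗[F] D.V j)), D.IsTensorProd i j k e →
          e.toLinearMap ∘ₗ x k =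
            (TensorProduct.map (x i) LinearMap.id +
              TensorProduct.map LinearMap.id (x j)) ∘ₗ e.toLinearMap) ∧
        (∀ i, D.IsTrivOneDim i → x i = 0) ∧
        (∃ δ : (↥D.M → F) → F, ∀ (i : D.ι) (φ : Module.Dual F (D.V i)) (v : D.V i),
          φ ∈ D.du i → δ (D.matCoef i φ v) = φ (x i v)) }

/-- The Lie algebra `Lie(N)` of a submonoid `N ⊆ M`: those `x ∈ Lie(M)` whose derivation
`δ_x` annihilates the vanishing ideal `I(N) ⊆ F[M]`. -/
def LieOf (N : Set (↥D.M)) : Set (∀ i, Module.End F (D.V i)) :=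
  { x | x ∈ D.LieM ∧ ∀ (i : D.ι) (φ : Module.Dual F (D.V i)) (v : D.V i), φ ∈ D.du i →
      (∀ n ∈ N, D.matCoef i φ v n = 0) → φ (x i v) = 0 }

/-- The unit group `M^×` of the Tannaka monoid, as a subset of `M`. -/
def unitsSet : Set (↥D.M) :=
  { m | ∃ n : ↥D.M, m.1 * n.1 = 1 ∧ n.1 * m.1 = 1 }

/-- The pair `C`, `C^du` is good for integrating `g`: `g ⊆ Lie(M)`. -/
def Good : Prop := ∀ x : g, (fun i => (D.ρ i x : Module.End F (D.V i))) ∈ D.LieM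

/-- The pair `C`, `C^du` is very good for integrating `g`: `g ⊆ Lie(M^×)`. -/
def VeryGood : Prop :=
  ∀ x : g, (fun i => (D.ρ i x : Module.End F (D.V i))) ∈ D.LieOf D.unitsSet

/-- A subset `S ⊆ M` is Zariski dense in `M`. -/
def DenseIn (S : Set (↥D.M)) : Prop :=
  ∀ f ∈ D.coordRing, (∀ m ∈ S, f m = 0) → ∀ m, f m = 0

theorem one_mem_M : (1 : ∀ i, Module.End F (D.V i)) ∈ D.M := by
  refine ⟨⟨?_, ?_⟩, ?_, ?_⟩
  · intro i φ hφ
    first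
      | simpa [Module.End.one_eq_id] using hφ
      | exact hφ
  · intro i j f _
    ext v
    simp
  · intro i j k e _
    ext v
    simp [TensorProduct.map_one]
  · intro i _
    rfl

/-- The unit of the Tannaka monoid as an element of the subtype `↥M`. -/
def oneM : ↥D.M := ⟨1, D.one_mem_M⟩

end TannakaSetting

open TensorProduct

namespace TannakaSetting

variable {F : Type u} [Field F] {g : Type v} [LieRing g] [LieAlgebra F g]
variable (D : TannakaSetting F g)

/-- The action of the universal enveloping algebra `U(g)` on the object `V i`. -/
noncomputable def uact (i : D.ι) :
    UniversalEnvelopingAlgebra F g →ₐ[F] Module.End F (D.V i) :=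
  UniversalEnvelopingAlgebra.lift F (D.ρ i)

/-- The matrix coefficient `g_{φ v}` on `U(g)`, `g_{φ v}(a) = φ (a_V v)`. -/
noncomputable def uMatCoef (i : D.ι) (φ : Module.Dual F (D.V i)) (v : D.V i) :
    Module.Dual F (UniversalEnvelopingAlgebra F g) where
  toFun a := φ (D.uact i a v)
  map_add' a b := by simp [map_add, LinearMap.add_apply]
  map_smul' c a := by
    show φ (D.uact i (c • a) v) = c • φ (D.uact i a v)
    rw [map_smul]
    simp

/-- The algebra of matrix coefficients `F[U(g)] ⊆ U(g)*`. -/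
noncomputable def uCoordRing : Set (Module.Dual F (UniversalEnvelopingAlgebra F g)) :=
  { h | ∃ (i : D.ι) (φ : Module.Dual F (D.V i)) (v : D.V i),
      φ ∈ D.du i ∧ h = D.uMatCoef i φ v }

end TannakaSetting

/-!
Both `F[M]` and `F[U(g)]` consist of matrix coefficients of the same triples `(V, φ, v)`, and
direct sums, tensor products and the trivial module realise sums, products and units on both
sides at once (on `U(g)` through `Δ` and `ε`). So everything reduces to
`f_{φv} = 0 ↔ g_{φv} = 0`. If `g_{φv} = 0` then `f_{φv} = 0`, because every `m ∈ M` acts on `v`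
like some `a ∈ U(g)`: `m` preserves the cyclic submodule `U(g) v`, an object of `C`. Conversely,
if `f_{φv} = 0`, applying `δ_x` to its right translates by `m ∈ M` gives `f_{φ, x v} = 0` for
`x ∈ g`, hence `f_{φ, a v} = 0` for all `a ∈ U(g)`, and evaluating at `1 ∈ M` gives `g_{φv} = 0`.
-/

namespace UniversalEnvelopingAlgebra

variable {R : Type*} [CommRing R] {L : Type*} [LieRing L] [LieAlgebra R L]

@[elab_as_elim]
theorem induction {C : UniversalEnvelopingAlgebra R L → Prop}
    (algebraMap : ∀ r, C (algebraMap R (UniversalEnvelopingAlgebra R L) r))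
    (ι : ∀ x, C (ι R x)) (mul : ∀ a b, C a → C b → C (a * b))
    (add : ∀ a b, C a → C b → C (a + b)) (a : UniversalEnvelopingAlgebra R L) : C a := by
  obtain ⟨t, rfl⟩ := RingCon.mkₐ_surjective (α := R) (ringCon R L) a
  induction t using TensorAlgebra.induction with
  | algebraMap r => rw [AlgHom.commutes]; exact algebraMap r
  | ι x => exact ι x
  | mul s t hs ht => rw [map_mul]; exact mul _ _ hs ht
  | add s t hs ht => rw [map_add]; exact add _ _ hs ht

variable {M N : Type*} [AddCommGroup M] [Module R M] [AddCommGroup N] [Module R N]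

theorem comp_eq_comp_of_forall_ι (A : UniversalEnvelopingAlgebra R L →ₐ[R] Module.End R M)
    (B : UniversalEnvelopingAlgebra R L →ₐ[R] Module.End R N) (f : M →ₗ[R] N)
    (h : ∀ x, f ∘ₗ A (ι R x) = B (ι R x) ∘ₗ f) (a : UniversalEnvelopingAlgebra R L) :
    f ∘ₗ A a = B a ∘ₗ f := by
  induction a using induction with
  | algebraMap r => ext m; simp [Module.algebraMap_end_apply]
  | ι x => exact h x
  | mul a b ha hb =>
    rw [map_mul, map_mul, Module.End.mul_eq_comp, Module.End.mul_eq_comp, ← LinearMap.comp_assoc,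
      ha, LinearMap.comp_assoc, hb, LinearMap.comp_assoc]
  | add a b ha hb => rw [map_add, map_add, LinearMap.comp_add, LinearMap.add_comp, ha, hb]

theorem mem_invtSubmodule_of_forall_ι (A : UniversalEnvelopingAlgebra R L →ₐ[R] Module.End R M)
    {p : Submodule R M} (h : ∀ x, p ∈ (A (ι R x)).invtSubmodule)
    (a : UniversalEnvelopingAlgebra R L) : p ∈ (A a).invtSubmodule := by
  induction a using induction with
  | algebraMap r =>
    rw [AlgHom.commutes, Algebra.algebraMap_eq_smul_one]
    exact Module.End.invtSubmodule_le_invtSubmodule_smul _ r (by simp)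
  | ι x => exact h x
  | mul a b ha hb => rw [map_mul]; exact Module.End.invtSubmodule.comp _ ha hb
  | add a b ha hb =>
    rw [map_add]; exact Module.End.invtSubmodule_inf_invtSubmodule_le_invtSubmodule_add _ _ ⟨ha, hb⟩

end UniversalEnvelopingAlgebra

namespace TannakaSetting

variable {F : Type u} [Field F] {g : Type v} [LieRing g] [LieAlgebra F g]
variable (D : TannakaSetting F g)

local notation "𝔘" => UniversalEnvelopingAlgebra F g

@[simp]
theorem uact_ι (i : D.ι) (x : g) : D.uact i (UniversalEnvelopingAlgebra.ι F x) = D.ρ i x :=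
  UniversalEnvelopingAlgebra.lift_ι_apply F (D.ρ i) x

variable {D}

theorem IsHom.comp_uact {i j : D.ι} {f : D.V i →ₗ[F] D.V j} (hf : D.IsHom f) (a : 𝔘) :
    f ∘ₗ D.uact i a = D.uact j a ∘ₗ f :=
  UniversalEnvelopingAlgebra.comp_eq_comp_of_forall_ι _ _ f
    (fun x => by rw [uact_ι, uact_ι]; exact hf x) a

theorem uact_preservesDu (HG : D.IsGoodSetting) (i : D.ι) (a : 𝔘) :
    D.PreservesDu i (D.uact i a) := by
  induction a using UniversalEnvelopingAlgebra.induction with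
  | algebraMap r =>
    intro φ hφ
    convert (D.du i).smul_mem r hφ using 1
    ext v; simp [Module.algebraMap_end_apply]
  | ι x => rw [uact_ι]; exact HG.du_g i x
  | mul a b ha hb => rw [map_mul]; exact fun φ hφ => hb _ (ha φ hφ)
  | add a b ha hb =>
    intro φ hφ
    rw [map_add, LinearMap.dualMap_apply', LinearMap.comp_add]
    exact (D.du i).add_mem (ha φ hφ) (hb φ hφ)

theorem mul_mem_M {m n : ∀ i, Module.End F (D.V i)} (hm : m ∈ D.M) (hn : n ∈ D.M) :
    m * n ∈ D.M := by
  obtain ⟨⟨hm_du, hm_nat⟩, hm_tensor, hm_triv⟩ := hm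
  obtain ⟨⟨hn_du, hn_nat⟩, hn_tensor, hn_triv⟩ := hn
  refine ⟨⟨fun i φ hφ => hn_du i _ (hm_du i φ hφ), fun i j f hf => ?_⟩,
    fun i j k e he => ?_, fun i hi => by simp [hm_triv i hi, hn_triv i hi]⟩
  · simp only [Pi.mul_apply, Module.End.mul_eq_comp]
    rw [← LinearMap.comp_assoc, hm_nat i j f hf, LinearMap.comp_assoc, hn_nat i j f hf,
      LinearMap.comp_assoc]
  · simp only [Pi.mul_apply, Module.End.mul_eq_comp]
    rw [← LinearMap.comp_assoc, hm_tensor i j k e he, LinearMap.comp_assoc, hn_tensor i j k e he,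
      ← LinearMap.comp_assoc, TensorProduct.map_comp]

theorem IsSumProd.isHom_fst_comp {i j k : D.ι} {e : D.V k ≃ₗ[F] (D.V i × D.V j)}
    (he : D.IsSumProd i j k e) : D.IsHom (LinearMap.fst F (D.V i) (D.V j) ∘ₗ e.toLinearMap) := by
  intro x
  rw [LinearMap.comp_assoc, he x]
  rfl

theorem IsSumProd.isHom_snd_comp {i j k : D.ι} {e : D.V k ≃ₗ[F] (D.V i × D.V j)}
    (he : D.IsSumProd i j k e) : D.IsHom (LinearMap.snd F (D.V i) (D.V j) ∘ₗ e.toLinearMap) := by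
  intro x
  rw [LinearMap.comp_assoc, he x]
  rfl

theorem IsSumProd.apply_symm_of_natural {i j k : D.ι} {e : D.V k ≃ₗ[F] (D.V i × D.V j)}
    (he : D.IsSumProd i j k e) {T : ∀ i, Module.End F (D.V i)}
    (hT : ∀ (i j : D.ι) (f : D.V i →ₗ[F] D.V j), D.IsHom f → f ∘ₗ T i = T j ∘ₗ f)
    (v : D.V i) (w : D.V j) : e (T k (e.symm (v, w))) = (T i v, T j w) := by
  have hfst := LinearMap.congr_fun (hT k i _ he.isHom_fst_comp) (e.symm (v, w))
  have hsnd := LinearMap.congr_fun (hT k j _ he.isHom_snd_comp) (e.symm (v, w))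
  simp only [LinearMap.comp_apply, LinearEquiv.coe_coe, LinearEquiv.apply_symm_apply,
    LinearMap.fst_apply, LinearMap.snd_apply] at hfst hsnd
  exact Prod.ext hfst hsnd

theorem IsTensorProd.comp_uact {Δ : 𝔘 →ₐ[F] 𝔘 ⊗[F] 𝔘}
    (hΔ : ∀ x : g, Δ (UniversalEnvelopingAlgebra.ι F x) =
      1 ⊗ₜ[F] (UniversalEnvelopingAlgebra.ι F x) + (UniversalEnvelopingAlgebra.ι F x) ⊗ₜ[F] 1)
    {i j k : D.ι} {e : D.V k ≃ₗ[F] (D.V i ⊗[F] D.V j)} (he : D.IsTensorProd i j k e) (a : 𝔘) :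
    e.toLinearMap ∘ₗ D.uact k a =
      Module.endTensorEndAlgHom (R := F) (S := F) (A := F)
        (Algebra.TensorProduct.map (D.uact i) (D.uact j) (Δ a)) ∘ₗ e.toLinearMap := by
  refine UniversalEnvelopingAlgebra.comp_eq_comp_of_forall_ι _
    ((Module.endTensorEndAlgHom (R := F) (S := F) (A := F)).comp
      ((Algebra.TensorProduct.map (D.uact i) (D.uact j)).comp Δ)) _ (fun x => ?_) a
  rw [uact_ι, he x]
  simp only [AlgHom.comp_apply, hΔ, map_add, Algebra.TensorProduct.map_tmul, map_one, uact_ι,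
    Module.endTensorEndAlgHom_apply, AlgebraTensorModule.map_eq, tensorρ, add_comm]
  rfl

theorem dualDistrib_uMatCoef_tmul {i j : D.ι} (φ : Module.Dual F (D.V i))
    (ψ : Module.Dual F (D.V j)) (v : D.V i) (w : D.V j) (t : 𝔘 ⊗[F] 𝔘) :
    TensorProduct.dualDistrib F 𝔘 𝔘 (D.uMatCoef i φ v ⊗ₜ[F] D.uMatCoef j ψ w) t =
      D.tensorDual φ ψ (Module.endTensorEndAlgHom (R := F) (S := F) (A := F)
        (Algebra.TensorProduct.map (D.uact i) (D.uact j) t) (v ⊗ₜ[F] w)) := by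
  induction t using TensorProduct.induction_on with
  | zero => simp
  | tmul a b => simp [tensorDual, uMatCoef, Module.endTensorEndAlgHom_apply]
  | add s t hs ht => simp only [map_add, LinearMap.add_apply, hs, ht]

theorem uact_eq_of_isTrivOneDim {ε : 𝔘 →ₐ[F] F}
    (hε : ∀ x : g, ε (UniversalEnvelopingAlgebra.ι F x) = 0) {i : D.ι} (hi : D.IsTrivOneDim i) :
    D.uact i = (Algebra.ofId F (Module.End F (D.V i))).comp ε := by
  ext x v
  simp [-UniversalEnvelopingAlgebra.ι_apply, hi.2 x, hε x]

theorem IsGoodSetting.exists_mem_du_apply_eq_one (HG : D.IsGoodSetting) (i : D.ι)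
    [Nontrivial (D.V i)] : ∃ φ ∈ D.du i, ∃ v, φ v = 1 := by
  obtain ⟨v, hv⟩ := exists_ne (0 : D.V i)
  obtain ⟨φ, hφ, hφv⟩ := HG.separating i v hv
  exact ⟨(φ v)⁻¹ • φ, (D.du i).smul_mem _ hφ, v, by simp [hφv]⟩

theorem apply_mem_of_mem_NatAlg (HG : D.IsGoodSetting) {m : ∀ i, Module.End F (D.V i)}
    (hm : m ∈ D.NatAlg) {i : D.ι} {U : Submodule F (D.V i)}
    (hU : ∀ x : g, ∀ u ∈ U, D.ρ i x u ∈ U) {u : D.V i} (hu : u ∈ U) : m i u ∈ U := by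
  obtain ⟨k, e, he⟩ := HG.submod_closed i U hU
  have hincl : D.IsHom (U.subtype ∘ₗ e.toLinearMap) := fun x => LinearMap.ext (he x)
  have hnat := LinearMap.congr_fun (hm.2 k i _ hincl) (e.symm ⟨u, hu⟩)
  simp only [LinearMap.comp_apply, LinearEquiv.coe_coe, LinearEquiv.apply_symm_apply,
    Submodule.subtype_apply] at hnat
  exact hnat ▸ Submodule.coe_mem _

theorem exists_uact_apply_eq (HG : D.IsGoodSetting) (m : ↥D.M) (i : D.ι) (v : D.V i) :
    ∃ a, D.uact i a v = m.1 i v := by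
  let cyclic := LinearMap.range ((LinearMap.applyₗ v).comp (D.uact i).toLinearMap)
  have hstab : ∀ x : g, ∀ u ∈ cyclic, D.ρ i x u ∈ cyclic := by
    rintro x _ ⟨a, rfl⟩
    exact ⟨UniversalEnvelopingAlgebra.ι F x * a, by simp [-UniversalEnvelopingAlgebra.ι_apply]⟩
  exact D.apply_mem_of_mem_NatAlg HG m.2.1 hstab ⟨1, by simp⟩

theorem matCoef_ρ_eq_zero (hgood : D.Good) {i : D.ι} {φ : Module.Dual F (D.V i)}
    (hφ : φ ∈ D.du i) {v : D.V i} (h : D.matCoef i φ v = 0) (x : g) :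
    D.matCoef i φ (D.ρ i x v) = 0 := by
  obtain ⟨-, -, -, δ, hδ⟩ := hgood x
  funext m
  -- `δ_x` sees the translate `n ↦ f_{φv} (m n)` of `f_{φv} = 0` as `φ (m (x v))`.
  have htranslate : D.matCoef i ((m.1 i).dualMap φ) v = D.matCoef i ((m.1 i).dualMap φ) 0 := by
    funext n
    simpa [matCoef] using congrFun h ⟨m.1 * n.1, D.mul_mem_M m.2 n.2⟩
  have hδm := congrArg δ htranslate
  rw [hδ _ _ _ (m.2.1.1 i φ hφ), hδ _ _ _ (m.2.1.1 i φ hφ)] at hδm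
  simpa [matCoef] using hδm

theorem matCoef_uact_eq_zero (hgood : D.Good) {i : D.ι} {φ : Module.Dual F (D.V i)}
    (hφ : φ ∈ D.du i) {v : D.V i} (h : D.matCoef i φ v = 0) (a : 𝔘) :
    D.matCoef i φ (D.uact i a v) = 0 := by
  let K : Submodule F (D.V i) := LinearMap.ker (LinearMap.pi fun m : ↥D.M => φ ∘ₗ m.1 i)
  have hK : K ∈ (D.uact i a).invtSubmodule :=
    UniversalEnvelopingAlgebra.mem_invtSubmodule_of_forall_ι _
      (fun x => by rw [uact_ι]; exact fun u hu => D.matCoef_ρ_eq_zero hgood hφ hu x) a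
  exact hK h

theorem matCoef_eq_zero_iff (HG : D.IsGoodSetting) (hgood : D.Good) {i : D.ι}
    {φ : Module.Dual F (D.V i)} (hφ : φ ∈ D.du i) {v : D.V i} :
    D.matCoef i φ v = 0 ↔ D.uMatCoef i φ v = 0 := by
  refine ⟨fun h => LinearMap.ext fun a => ?_, fun h => funext fun m => ?_⟩
  · simpa [matCoef, uMatCoef, oneM] using congrFun (D.matCoef_uact_eq_zero hgood hφ h a) D.oneM
  · obtain ⟨a, ha⟩ := D.exists_uact_apply_eq HG m i v
    simpa [matCoef, uMatCoef, ha] using LinearMap.congr_fun h a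

variable (D) in
/-- The graph of `Ψ : F[M] → F[U(g)]`, `f_{φv} ↦ g_{φv}`. -/
def IsCoefPair (f : ↥D.M → F) (h : Module.Dual F 𝔘) : Prop :=
  ∃ (i : D.ι) (φ : Module.Dual F (D.V i)) (v : D.V i),
    φ ∈ D.du i ∧ f = D.matCoef i φ v ∧ h = D.uMatCoef i φ v

theorem mem_uCoordRing_iff {h : Module.Dual F 𝔘} :
    h ∈ D.uCoordRing ↔ ∃ f, D.IsCoefPair f h := by
  constructor
  · rintro ⟨i, φ, v, hφ, rfl⟩
    exact ⟨_, i, φ, v, hφ, rfl, rfl⟩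
  · rintro ⟨f, i, φ, v, hφ, -, rfl⟩
    exact ⟨i, φ, v, hφ, rfl⟩

theorem exists_isCoefPair_of_mem_coordRing {f : ↥D.M → F} (hf : f ∈ D.coordRing) :
    ∃ h, D.IsCoefPair f h := by
  obtain ⟨i, φ, v, hφ, rfl⟩ := hf
  exact ⟨_, i, φ, v, hφ, rfl, rfl⟩

namespace IsCoefPair

variable {f f' : ↥D.M → F} {h h' : Module.Dual F (UniversalEnvelopingAlgebra F g)}

theorem mem_coordRing (hp : D.IsCoefPair f h) : f ∈ D.coordRing := by
  obtain ⟨i, φ, v, hφ, rfl, -⟩ := hp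
  exact ⟨i, φ, v, hφ, rfl⟩

theorem add (HG : D.IsGoodSetting) (hp : D.IsCoefPair f h) (hp' : D.IsCoefPair f' h') :
    D.IsCoefPair (f + f') (h + h') := by
  obtain ⟨i, φ, v, hφ, rfl, rfl⟩ := hp
  obtain ⟨j, ψ, w, hψ, rfl, rfl⟩ := hp'
  obtain ⟨k, e, he⟩ := HG.exists_sum i j
  refine ⟨k, _, e.symm (v, w), (HG.du_sum i j k e he _).mpr ⟨φ, hφ, ψ, hψ, rfl⟩, ?_, ?_⟩
  · funext m
    simp [matCoef, he.apply_symm_of_natural m.2.1.2]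
  · ext a
    simp [uMatCoef, he.apply_symm_of_natural fun _ _ _ hf => hf.comp_uact a]

theorem smul (hp : D.IsCoefPair f h) (c : F) : D.IsCoefPair (c • f) (c • h) := by
  obtain ⟨i, φ, v, hφ, rfl, rfl⟩ := hp
  exact ⟨i, c • φ, v, (D.du i).smul_mem c hφ, by funext m; simp [matCoef],
    by ext a; simp [uMatCoef]⟩

theorem sub (HG : D.IsGoodSetting) (hp : D.IsCoefPair f h) (hp' : D.IsCoefPair f' h') :
    D.IsCoefPair (f - f') (h - h') := by
  have hsum := hp.add HG (hp'.smul (-1))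
  rwa [neg_one_smul, neg_one_smul F h', ← sub_eq_add_neg, ← sub_eq_add_neg] at hsum

theorem mul (HG : D.IsGoodSetting) {Δ : 𝔘 →ₐ[F] 𝔘 ⊗[F] 𝔘}
    (hΔ : ∀ x : g, Δ (UniversalEnvelopingAlgebra.ι F x) =
      1 ⊗ₜ[F] (UniversalEnvelopingAlgebra.ι F x) + (UniversalEnvelopingAlgebra.ι F x) ⊗ₜ[F] 1)
    (hp : D.IsCoefPair f h) (hp' : D.IsCoefPair f' h') :
    D.IsCoefPair (f * f') (TensorProduct.dualDistrib F 𝔘 𝔘 (h ⊗ₜ[F] h') ∘ₗ Δ.toLinearMap) := by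
  obtain ⟨i, φ, v, hφ, rfl, rfl⟩ := hp
  obtain ⟨j, ψ, w, hψ, rfl, rfl⟩ := hp'
  obtain ⟨k, e, he⟩ := HG.exists_tensor i j
  refine ⟨k, _, e.symm (v ⊗ₜ[F] w), HG.du_tensor i j k e he φ hφ ψ hψ, ?_, ?_⟩
  · funext m
    have hm := LinearMap.congr_fun (m.2.2.1 i j k e he) (e.symm (v ⊗ₜ[F] w))
    simp only [LinearMap.comp_apply, LinearEquiv.coe_coe, LinearEquiv.apply_symm_apply] at hm
    simp [matCoef, hm, tensorDual]
  · ext a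
    have ha := LinearMap.congr_fun (he.comp_uact hΔ a) (e.symm (v ⊗ₜ[F] w))
    simp only [LinearMap.comp_apply, LinearEquiv.coe_coe, LinearEquiv.apply_symm_apply] at ha
    rw [LinearMap.comp_apply, AlgHom.toLinearMap_apply, dualDistrib_uMatCoef_tmul, ← ha]
    rfl

theorem eq_zero_iff (HG : D.IsGoodSetting) (hgood : D.Good) (hp : D.IsCoefPair f h) :
    f = 0 ↔ h = 0 := by
  obtain ⟨i, φ, v, hφ, rfl, rfl⟩ := hp
  exact D.matCoef_eq_zero_iff HG hgood hφ

theorem eq_iff (HG : D.IsGoodSetting) (hgood : D.Good) (hp : D.IsCoefPair f h)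
    (hp' : D.IsCoefPair f' h') : f = f' ↔ h = h' := by
  rw [← sub_eq_zero, ← sub_eq_zero (a := h), (hp.sub HG hp').eq_zero_iff HG hgood]

end IsCoefPair

theorem isCoefPair_one (HG : D.IsGoodSetting) {ε : 𝔘 →ₐ[F] F}
    (hε : ∀ x : g, ε (UniversalEnvelopingAlgebra.ι F x) = 0) : D.IsCoefPair 1 ε.toLinearMap := by
  obtain ⟨i, hi⟩ := HG.exists_triv
  have : Nontrivial (D.V i) := Module.nontrivial_of_finrank_eq_succ hi.1
  obtain ⟨φ, hφ, v, hv⟩ := HG.exists_mem_du_apply_eq_one i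
  refine ⟨i, φ, v, hφ, funext fun m => ?_, LinearMap.ext fun a => ?_⟩
  · simp [matCoef, m.2.2.2 i hi, hv]
  · simp [uMatCoef, D.uact_eq_of_isTrivOneDim hε hi, hv]

theorem isCoefPair_translate (HG : D.IsGoodSetting) {i : D.ι} {φ : Module.Dual F (D.V i)}
    (hφ : φ ∈ D.du i) (v : D.V i) (a b : 𝔘) :
    D.IsCoefPair (D.matCoef i ((D.uact i a).dualMap φ) (D.uact i b v))
      (D.uMatCoef i φ v ∘ₗ (LinearMap.mulLeft F a ∘ₗ LinearMap.mulRight F b)) :=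
  ⟨i, _, _, D.uact_preservesDu HG i a φ hφ, rfl, by ext c; simp [uMatCoef]⟩

variable (D) in
/-- The map `Ψ`, computed through a chosen presentation `f = f_{φv}`; by `toUMatCoef_eq` the
choice does not matter. -/
noncomputable def toUMatCoef (f : {f : ↥D.M → F // f ∈ D.coordRing}) : Module.Dual F 𝔘 :=
  (D.exists_isCoefPair_of_mem_coordRing f.2).choose

theorem isCoefPair_toUMatCoef (f : {f : ↥D.M → F // f ∈ D.coordRing}) :
    D.IsCoefPair f.1 (D.toUMatCoef f) :=
  (D.exists_isCoefPair_of_mem_coordRing f.2).choose_spec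

theorem toUMatCoef_eq (HG : D.IsGoodSetting) (hgood : D.Good)
    ⦃f : {f : ↥D.M → F // f ∈ D.coordRing}⦄ ⦃h : Module.Dual F 𝔘⦄ (hp : D.IsCoefPair f.1 h) :
    D.toUMatCoef f = h :=
  ((isCoefPair_toUMatCoef f).eq_iff HG hgood hp).mp rfl

theorem toUMatCoef_injective (HG : D.IsGoodSetting) (hgood : D.Good) :
    Function.Injective D.toUMatCoef := fun f f' hff' =>
  Subtype.ext (((isCoefPair_toUMatCoef f).eq_iff HG hgood (isCoefPair_toUMatCoef f')).mpr hff')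

end TannakaSetting

variable {F : Type u} [Field F] [CharZero F] {g : Type v} [LieRing g] [LieAlgebra F g]

/-- **The embedding of `F[M]` into the convolution algebra `U(g)*`.**
(a) The matrix coefficients `g_{φ v}` on `U(g)` form a subalgebra `F[U(g)]` of the convolution
algebra `U(g)*` containing the counit `ε`, invariant under the `U(g)ᵒᵖ ⊗ U(g)`-action
`(π(a ⊗ b) h)(x) = h (a x b)`.
(b) If the pair `C`, `C^du` is good for integrating `g`, there is an algebra isomorphism
`Ψ : F[M] → F[U(g)]` with `Ψ (f_{φ v}) = g_{φ v}`, equivariant for the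
`U(g)ᵒᵖ ⊗ U(g)`-actions. -/
theorem stmt_7 (D : TannakaSetting F g) (HG : D.IsGoodSetting)
    (Δ : UniversalEnvelopingAlgebra F g →ₐ[F]
      (UniversalEnvelopingAlgebra F g ⊗[F] UniversalEnvelopingAlgebra F g))
    (hΔ : ∀ x : g, Δ (UniversalEnvelopingAlgebra.ι F x) =
      1 ⊗ₜ[F] (UniversalEnvelopingAlgebra.ι F x) + (UniversalEnvelopingAlgebra.ι F x) ⊗ₜ[F] 1)
    (ε : UniversalEnvelopingAlgebra F g →ₐ[F] F)
    (hε : ∀ x : g, ε (UniversalEnvelopingAlgebra.ι F x) = 0) :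
    -- (a) `F[U(g)]` is a subalgebra of the convolution algebra `U(g)*` ...
    (ε.toLinearMap ∈ D.uCoordRing) ∧
    (∀ h ∈ D.uCoordRing, ∀ h' ∈ D.uCoordRing, h + h' ∈ D.uCoordRing) ∧
    (∀ h ∈ D.uCoordRing, ∀ c : F, c • h ∈ D.uCoordRing) ∧
    (∀ h ∈ D.uCoordRing, ∀ h' ∈ D.uCoordRing,
      (TensorProduct.dualDistrib F (UniversalEnvelopingAlgebra F g)
        (UniversalEnvelopingAlgebra F g) (h ⊗ₜ[F] h')) ∘ₗ Δ.toLinearMap ∈ D.uCoordRing) ∧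
    -- ... invariant under the `U(g)ᵒᵖ ⊗ U(g)`-action `h ↦ (x ↦ h (a x b))`:
    (∀ (a b : UniversalEnvelopingAlgebra F g), ∀ h ∈ D.uCoordRing,
      h ∘ₗ ((LinearMap.mulLeft F a) ∘ₗ (LinearMap.mulRight F b)) ∈ D.uCoordRing) ∧
    -- (b) the `U(g)ᵒᵖ ⊗ U(g)`-equivariant algebra isomorphism `Ψ : F[M] → F[U(g)]`:
    (D.Good →
      ∃ Ψ : {f : ↥D.M → F // f ∈ D.coordRing} →
          Module.Dual F (UniversalEnvelopingAlgebra F g),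
        (∀ f, Ψ f ∈ D.uCoordRing) ∧
        (∀ h ∈ D.uCoordRing, ∃ f, Ψ f = h) ∧
        Function.Injective Ψ ∧
        (∀ (i : D.ι) (φ : Module.Dual F (D.V i)) (v : D.V i) (hφ : φ ∈ D.du i),
          Ψ ⟨D.matCoef i φ v, ⟨i, φ, v, hφ, rfl⟩⟩ = D.uMatCoef i φ v) ∧
        (∀ f h (hs : f.1 + h.1 ∈ D.coordRing), Ψ ⟨f.1 + h.1, hs⟩ = Ψ f + Ψ h) ∧
        (∀ (c : F) f (hs : c • f.1 ∈ D.coordRing), Ψ ⟨c • f.1, hs⟩ = c • Ψ f) ∧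
        (∀ f h (hs : f.1 * h.1 ∈ D.coordRing),
          Ψ ⟨f.1 * h.1, hs⟩ =
            (TensorProduct.dualDistrib F (UniversalEnvelopingAlgebra F g)
              (UniversalEnvelopingAlgebra F g) ((Ψ f) ⊗ₜ[F] (Ψ h))) ∘ₗ Δ.toLinearMap) ∧
        (∀ (hone : (1 : ↥D.M → F) ∈ D.coordRing), Ψ ⟨1, hone⟩ = ε.toLinearMap) ∧
        (∀ (a b : UniversalEnvelopingAlgebra F g) (i : D.ι) (φ : Module.Dual F (D.V i))
            (v : D.V i) (hφ : φ ∈ D.du i) (hφ' : (D.uact i a).dualMap φ ∈ D.du i),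
          Ψ ⟨D.matCoef i ((D.uact i a).dualMap φ) (D.uact i b v),
              ⟨i, (D.uact i a).dualMap φ, D.uact i b v, hφ', rfl⟩⟩ =
            (D.uMatCoef i φ v) ∘ₗ ((LinearMap.mulLeft F a) ∘ₗ (LinearMap.mulRight F b)))) := by
  simp only [TannakaSetting.mem_uCoordRing_iff]
  refine ⟨⟨1, D.isCoefPair_one HG hε⟩, ?_, ?_, ?_, ?_, fun hgood => ?_⟩
  · rintro _ ⟨f, hf⟩ _ ⟨f', hf'⟩
    exact ⟨_, hf.add HG hf'⟩
  · rintro _ ⟨f, hf⟩ c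
    exact ⟨_, hf.smul c⟩
  · rintro _ ⟨f, hf⟩ _ ⟨f', hf'⟩
    exact ⟨_, hf.mul HG hΔ hf'⟩
  · rintro a b _ ⟨-, i, φ, v, hφ, -, rfl⟩
    exact ⟨_, D.isCoefPair_translate HG hφ v a b⟩
  have hΨ := D.toUMatCoef_eq HG hgood
  have hpair := D.isCoefPair_toUMatCoef
  refine ⟨D.toUMatCoef, fun f => ⟨f.1, hpair f⟩, ?_, D.toUMatCoef_injective HG hgood,
    fun i φ v hφ => hΨ ⟨i, φ, v, hφ, rfl, rfl⟩, fun f f' _ => hΨ ((hpair f).add HG (hpair f')),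
    fun c f _ => hΨ ((hpair f).smul c), fun f f' _ => hΨ ((hpair f).mul HG hΔ (hpair f')),
    fun _ => hΨ (D.isCoefPair_one HG hε),
    fun a b i φ v hφ _ => hΨ (D.isCoefPair_translate HG hφ v a b)⟩
  rintro h ⟨f, hf⟩
  exact ⟨⟨f, hf.mem_coordRing⟩, hΨ hf⟩
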